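/- arXiv:1907.09113 — 2 statements merged into one kernel-verified Lean document; each statement's English description precedes it below -/
import Mathlib

section
/- If a preference aggregation rule F is unanimous, then the graph aggregation rule F' (restricted to justifiable profiles) corresponding to the mechanism C_F^{VAF} with fixed VAF selection S is unanimous: for every justifiable profile AF = ⟨AF_1, …, AF_n⟩ and every pair of arguments a, b, if a →_i b for every agent i, then a → b ∈ F'(AF). -/
/-- An audience is a strict linear order on values: irreflexive, transitive and
complete (any two distinct values are comparable). -/
def IsAudience {V : Type} (P : V → V → Prop) : Prop :=
  (∀ v, ¬ P v v) ∧ (∀ u v w, P u v → P v w → P u w) ∧ (∀ v w, v ≠ w → P v w ∨ P w v)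

/-- Given a VAF with attack relation `att` and value labelling `val`, and an audience `P`,
argument `a` defeats `b` iff `a` attacks `b` and `val b` is not preferred to `val a`.
`defeats att val P` is the defeat graph induced by `P`. -/
def defeats {A V : Type} (att : A → A → Prop) (val : A → V) (P : V → V → Prop) :
    A → A → Prop :=
  fun a b => att a b ∧ ¬ P (val b) (val a)

/-- A profile of argumentation frameworks on `A` is justifiable (with values in `V`)
if there is a single VAF such that every member of the profile is a defeat graph of
that VAF induced by some audience. -/
def JustifiableProfile {A V : Type} {n : ℕ} (AF : Fin n → A → A → Prop) : Prop :=
  ∃ (att : A → A → Prop) (val : A → V),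
    ∀ i, ∃ P : V → V → Prop, IsAudience P ∧ AF i = defeats att val P

/-! If every agent's audience lets `a` defeat `b`, then by completeness either
`val a = val b` or every agent strictly prefers `val a` to `val b`. In the first case
irreflexivity, in the second unanimity plus asymmetry, shows that the aggregate audience
does not prefer `val b` to `val a`; the attack itself is read off any one agent. -/

namespace IsAudience

variable {V : Type} {P : V → V → Prop}

theorem irrefl (hP : IsAudience P) (v : V) : ¬ P v v :=
  hP.1 v

theorem asymm (hP : IsAudience P) {v w : V} (hvw : P v w) : ¬ P w v :=
  fun hwv => hP.irrefl v (hP.2.1 v w v hvw hwv)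

theorem of_not_rev (hP : IsAudience P) {v w : V} (hne : v ≠ w) (hwv : ¬ P w v) : P v w :=
  (hP.2.2 v w hne).resolve_right hwv

end IsAudience

section Unanimity

variable {ι V : Type} {P : ι → V → V → Prop} {Q : V → V → Prop}

/-- With no agents every pair of values is unanimously ranked, so an irreflexive
unanimous aggregate forces at least one agent. -/
theorem nonempty_of_unanimous (v : V) (hQ : ∀ v, ¬ Q v v)
    (hU : ∀ v w, (∀ i, P i v w) → Q v w) : Nonempty ι := by
  by_contra hι
  rw [not_nonempty_iff] at hι
  exact hQ v (hU v v isEmptyElim)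

theorem defeats_of_forall_defeats {A : Type} {att : A → A → Prop} {val : A → V} {a b : A}
    (hQ : IsAudience Q) (hP : ∀ i, IsAudience (P i))
    (hU : ∀ v w, (∀ i, P i v w) → Q v w)
    (hab : ∀ i, defeats att val (P i) a b) : defeats att val Q a b := by
  obtain ⟨i⟩ := nonempty_of_unanimous (val a) hQ.irrefl hU
  refine ⟨(hab i).1, ?_⟩
  by_cases hval : val a = val b
  · rw [hval]
    exact hQ.irrefl _
  · exact hQ.asymm (hU _ _ fun j => (hP j).of_not_rev hval (hab j).2)

end Unanimity

/-- if the preference aggregation rule `F` is unanimous, then the graph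
aggregation rule `F'` corresponding to the mechanism `C_F^VAF` with fixed VAF
selection is unanimous on justifiable profiles. -/
theorem mechanism_with_fixed_vaf_preserves_unanimity
    (A V : Type) (n : ℕ)
    (F : (Fin n → V → V → Prop) → (V → V → Prop))
    (hF : ∀ P : Fin n → V → V → Prop, (∀ i, IsAudience (P i)) → IsAudience (F P))
    -- the VAF selection `S`: it assigns to each justifiable profile a VAF
    -- `⟨A, Satt AF, V, Sval AF⟩` justifying it, together with a selected profile
    -- `Jsel AF` of audiences justifying the profile with respect to that VAF
    (Satt : (Fin n → A → A → Prop) → (A → A → Prop))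
    (Sval : (Fin n → A → A → Prop) → (A → V))
    (Jsel : (Fin n → A → A → Prop) → (Fin n → V → V → Prop))
    (hS : ∀ AF : Fin n → A → A → Prop, JustifiableProfile (V := V) AF →
      (∀ i, IsAudience (Jsel AF i)) ∧
      (∀ i, AF i = defeats (Satt AF) (Sval AF) (Jsel AF i)))
    -- `F'` is the graph aggregation rule corresponding to the mechanism `C_F^VAF`:
    -- on justifiable profiles it outputs the defeat graph of the selected VAF
    -- induced by `F` applied to the selected justifying audiences
    (F' : (Fin n → A → A → Prop) → (A → A → Prop))
    (hF' : ∀ AF : Fin n → A → A → Prop, JustifiableProfile (V := V) AF →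
      F' AF = defeats (Satt AF) (Sval AF) (F (Jsel AF)))
    (hUnanimous : ∀ P : Fin n → V → V → Prop, (∀ i, IsAudience (P i)) →
      ∀ v w, (∀ i, P i v w) → F P v w) :
    ∀ AF : Fin n → A → A → Prop, JustifiableProfile (V := V) AF →
      ∀ a b, (∀ i, AF i a b) → F' AF a b := by
  intro AF hJ a b hab
  obtain ⟨hAud, hAF⟩ := hS AF hJ
  rw [hF' AF hJ]
  exact defeats_of_forall_defeats (hF _ hAud) hAud (hUnanimous _ hAud)
    fun i => hAF i ▸ hab i
end

section
/- If a preference aggregation rule F is independent, then the graph aggregation rule F' (restricted to justifiable profiles) corresponding to the mechanism C_F^{VAF} with fixed VAF selection S is independent: for any pair of justifiable profiles AF, AF' (justified by the same selected VAF) and any pair of arguments a, b, if N^{a→b}_{AF} = N^{a→b}_{AF'}, then a → b ∈ F'(AF) iff a → b ∈ F'(AF'). -/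
/-!
Within one VAF, an attacked pair `a → b` is a defeat for an audience exactly when that
audience does not prefer `val b` to `val a`. So the agents supporting the defeat
`a → b` are the complement of those preferring `val b` to `val a`, and the aggregate
defeat `a → b` is decided by whether `F` ranks `val b` above `val a`; independence of `F`
makes that depend only on the supporting coalition.
-/

def IsIndependent {ι V : Type} (F : (ι → V → V → Prop) → V → V → Prop) : Prop :=
  ∀ P P' : ι → V → V → Prop, (∀ i, IsAudience (P i)) → (∀ i, IsAudience (P' i)) →
    ∀ v w : V, {i | P i v w} = {i | P' i v w} → (F P v w ↔ F P' v w)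

section Defeats

variable {ι A V : Type} {att : A → A → Prop} {val : A → V}

theorem defeats_iff_of_attacks {P : V → V → Prop} {a b : A} (hab : att a b) :
    defeats att val P a b ↔ ¬ P (val b) (val a) := by
  simp only [defeats, hab, true_and]

theorem setOf_prefers_eq_of_setOf_defeats_eq {P P' : ι → V → V → Prop} {a b : A}
    (hab : att a b)
    (h : {i | defeats att val (P i) a b} = {i | defeats att val (P' i) a b}) :
    {i | P i (val b) (val a)} = {i | P' i (val b) (val a)} := by
  ext i
  simpa only [Set.mem_ofPred_eq, defeats_iff_of_attacks hab, not_iff_not] using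
    Set.ext_iff.mp h i

theorem defeats_aggregate_iff_of_setOf_defeats_eq {F : (ι → V → V → Prop) → V → V → Prop}
    (hF : IsIndependent F) {P P' : ι → V → V → Prop}
    (hP : ∀ i, IsAudience (P i)) (hP' : ∀ i, IsAudience (P' i)) {a b : A}
    (h : {i | defeats att val (P i) a b} = {i | defeats att val (P' i) a b}) :
    defeats att val (F P) a b ↔ defeats att val (F P') a b := by
  by_cases hab : att a b
  · rw [defeats_iff_of_attacks hab, defeats_iff_of_attacks hab]
    exact not_congr (hF P P' hP hP' _ _ (setOf_prefers_eq_of_setOf_defeats_eq hab h))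
  · simp only [defeats, hab, false_and]

end Defeats

theorem mechanism_with_fixed_vaf_preserves_independence_general
    (A V : Type) (n : ℕ)
    (F : (Fin n → V → V → Prop) → (V → V → Prop))
    -- the VAF selection `S`: it assigns to each justifiable profile a VAF
    -- `⟨A, Satt AF, V, Sval AF⟩` justifying it, together with a selected profile
    -- `Jsel AF` of audiences justifying the profile with respect to that VAF
    (Satt : (Fin n → A → A → Prop) → (A → A → Prop))
    (Sval : (Fin n → A → A → Prop) → (A → V))
    (Jsel : (Fin n → A → A → Prop) → (Fin n → V → V → Prop))
    (hS : ∀ AF : Fin n → A → A → Prop, JustifiableProfile (V := V) AF →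
      (∀ i, IsAudience (Jsel AF i)) ∧
      (∀ i, AF i = defeats (Satt AF) (Sval AF) (Jsel AF i)))
    -- `F'` is the graph aggregation rule corresponding to the mechanism `C_F^VAF`:
    -- on justifiable profiles it outputs the defeat graph of the selected VAF
    -- induced by `F` applied to the selected justifying audiences
    (F' : (Fin n → A → A → Prop) → (A → A → Prop))
    (hF' : ∀ AF : Fin n → A → A → Prop, JustifiableProfile (V := V) AF →
      F' AF = defeats (Satt AF) (Sval AF) (F (Jsel AF)))
    (hIndependent : ∀ P P' : Fin n → V → V → Prop,
      (∀ i, IsAudience (P i)) → (∀ i, IsAudience (P' i)) →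
      ∀ v w : V, {i : Fin n | P i v w} = {i : Fin n | P' i v w} →
        (F P v w ↔ F P' v w)) :
    ∀ AF AF' : Fin n → A → A → Prop,
      JustifiableProfile (V := V) AF → JustifiableProfile (V := V) AF' →
      Satt AF = Satt AF' → Sval AF = Sval AF' →
      ∀ a b, {i : Fin n | AF i a b} = {i : Fin n | AF' i a b} →
        (F' AF a b ↔ F' AF' a b) := by
  intro AF AF' hJ hJ' hatt hval a b hN
  obtain ⟨hAud, hAF⟩ := hS AF hJ
  obtain ⟨hAud', hAF'⟩ := hS AF' hJ'
  simp only [hAF, hAF', hatt, hval] at hN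
  rw [hF' AF hJ, hF' AF' hJ', hatt, hval]
  exact defeats_aggregate_iff_of_setOf_defeats_eq hIndependent hAud hAud' hN

/-- if the preference aggregation rule `F` is independent, then the
graph aggregation rule `F'` corresponding to the mechanism `C_F^VAF` with fixed VAF
selection is independent: for justifiable profiles justified by the same selected
VAF, acceptance of an attack depends only on the set of agents supporting it. -/
theorem mechanism_with_fixed_vaf_preserves_independence
    (A V : Type) (n : ℕ)
    (F : (Fin n → V → V → Prop) → (V → V → Prop))
    (hF : ∀ P : Fin n → V → V → Prop, (∀ i, IsAudience (P i)) → IsAudience (F P))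
    -- the VAF selection `S`: it assigns to each justifiable profile a VAF
    -- `⟨A, Satt AF, V, Sval AF⟩` justifying it, together with a selected profile
    -- `Jsel AF` of audiences justifying the profile with respect to that VAF
    (Satt : (Fin n → A → A → Prop) → (A → A → Prop))
    (Sval : (Fin n → A → A → Prop) → (A → V))
    (Jsel : (Fin n → A → A → Prop) → (Fin n → V → V → Prop))
    (hS : ∀ AF : Fin n → A → A → Prop, JustifiableProfile (V := V) AF →
      (∀ i, IsAudience (Jsel AF i)) ∧
      (∀ i, AF i = defeats (Satt AF) (Sval AF) (Jsel AF i)))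
    -- `F'` is the graph aggregation rule corresponding to the mechanism `C_F^VAF`:
    -- on justifiable profiles it outputs the defeat graph of the selected VAF
    -- induced by `F` applied to the selected justifying audiences
    (F' : (Fin n → A → A → Prop) → (A → A → Prop))
    (hF' : ∀ AF : Fin n → A → A → Prop, JustifiableProfile (V := V) AF →
      F' AF = defeats (Satt AF) (Sval AF) (F (Jsel AF)))
    (hIndependent : ∀ P P' : Fin n → V → V → Prop,
      (∀ i, IsAudience (P i)) → (∀ i, IsAudience (P' i)) →
      ∀ v w : V, {i : Fin n | P i v w} = {i : Fin n | P' i v w} →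
        (F P v w ↔ F P' v w)) :
    ∀ AF AF' : Fin n → A → A → Prop,
      JustifiableProfile (V := V) AF → JustifiableProfile (V := V) AF' →
      Satt AF = Satt AF' → Sval AF = Sval AF' →
      ∀ a b, {i : Fin n | AF i a b} = {i : Fin n | AF' i a b} →
        (F' AF a b ↔ F' AF' a b) :=
  mechanism_with_fixed_vaf_preserves_independence_general A V n F Satt Sval Jsel hS F' hF'
    hIndependent
end
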